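/- arXiv:1608.05944 — 4 statements merged into one kernel-verified Lean document; each statement's English description precedes it below -/
import Mathlib

section
/- Each coordinate function of the map X : ℝ² → ℝ³ defined (for a fixed real parameter a > 0) by X(u,v) = ( [a·cos u·sin(a v)·cosh(a u)·cosh v − a·sin u·cos(a v)·sinh(a u)·sinh v + cos u·cos(a v)·cosh(a u)·sinh v + sin u·sin(a v)·sinh(a u)·cosh v]/(a²+1) + cos u·cosh v , [a·cos u·cos(a v)·sinh(a u)·sinh v + a·sin u·sin(a v)·cosh(a u)·cosh v + sin u·cos(a v)·cosh(a u)·sinh v − cos u·sin(a v)·sinh(a u)·cosh v]/(a²+1) + sin u·cosh v , −sin(a v)·sinh(a u)/a ) is harmonic on ℝ², i.e. ∂²X_k/∂u² + ∂²X_k/∂v² = 0 for k = 1,2,3. -/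
open Real

/-- First coordinate of the bending helicoid with timelike axis. -/
noncomputable def X1 (a u v : ℝ) : ℝ :=
  (a * cos u * sin (a*v) * cosh (a*u) * cosh v
   - a * sin u * cos (a*v) * sinh (a*u) * sinh v
   + cos u * cos (a*v) * cosh (a*u) * sinh v
   + sin u * sin (a*v) * sinh (a*u) * cosh v) / (a^2 + 1)
  + cos u * cosh v

/-- Second coordinate of the bending helicoid with timelike axis. -/
noncomputable def X2 (a u v : ℝ) : ℝ :=
  (a * cos u * cos (a*v) * sinh (a*u) * sinh v
   + a * sin u * sin (a*v) * cosh (a*u) * cosh v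
   + sin u * cos (a*v) * cosh (a*u) * sinh v
   - cos u * sin (a*v) * sinh (a*u) * cosh v) / (a^2 + 1)
  + sin u * cosh v

/-- Third coordinate of the bending helicoid with timelike axis. -/
noncomputable def X3 (a u v : ℝ) : ℝ :=
  - (sin (a*v) * sinh (a*u)) / a

/-!
Each coordinate is the real part of an entire function of `z = u + v i`, as the Björling formula
`X = Re (α(z) - i ∫ n(w) × α'(w) dw)` predicts. Along horizontal and vertical lines the second
derivatives of `Re F` are `Re F''` and `Re (i² F'') = -Re F''`, so they cancel.
-/

section

open Complex

theorem hasDerivAt_re_comp_line {F : ℂ → ℂ} (w c : ℂ) (t : ℝ)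
    (hF : DifferentiableAt ℂ F (w + t * c)) :
    HasDerivAt (fun t : ℝ => (F (w + t * c)).re) (deriv F (w + t * c) * c).re t := by
  have hline : HasDerivAt (fun z : ℂ => w + z * c) c t := by
    simpa using ((hasDerivAt_id (t : ℂ)).mul_const c).const_add w
  exact (hF.hasDerivAt.comp (t : ℂ) hline).real_of_complex

theorem deriv_deriv_re_comp_line {F : ℂ → ℂ} (hF : Differentiable ℂ F) (w c : ℂ) (t : ℝ) :
    deriv (deriv fun t : ℝ => (F (w + t * c)).re) t =
      (deriv (deriv F) (w + t * c) * c ^ 2).re := by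
  have hfirst : deriv (fun t : ℝ => (F (w + t * c)).re) =
      fun t : ℝ => (deriv F (w + t * c) * c).re :=
    funext fun t => (hasDerivAt_re_comp_line w c t (hF _)).deriv
  rw [hfirst, (hasDerivAt_re_comp_line (F := fun z => deriv F z * c) w c t
    (hF.deriv.mul_const c _)).deriv, deriv_mul_const (hF.deriv _), sq, mul_assoc]

theorem harmonic_of_eq_re {F : ℂ → ℂ} (hF : Differentiable ℂ F) {f : ℝ → ℝ → ℝ}
    (hf : ∀ u v : ℝ, f u v = (F (u + v * I)).re) (u v : ℝ) :
    deriv (deriv fun s => f s v) u + deriv (deriv fun t => f u t) v = 0 := by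
  have horizontal : (fun s => f s v) = fun s : ℝ => (F (v * I + s * 1)).re := by
    funext s
    rw [hf, add_comm, mul_one]
  have vertical : (fun t => f u t) = fun t : ℝ => (F (u + t * I)).re := funext (hf u)
  rw [horizontal, vertical, deriv_deriv_re_comp_line hF, deriv_deriv_re_comp_line hF,
    add_comm (v * I : ℂ), mul_one]
  simp

noncomputable def X1Potential (a : ℝ) (z : ℂ) : ℂ :=
  cos z - I * (a * cos z * sinh (a * z) + sin z * cosh (a * z)) / (a ^ 2 + 1 : ℝ)

noncomputable def X2Potential (a : ℝ) (z : ℂ) : ℂ :=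
  sin z - I * (a * sin z * sinh (a * z) - cos z * cosh (a * z)) / (a ^ 2 + 1 : ℝ)

noncomputable def X3Potential (a : ℝ) (z : ℂ) : ℂ :=
  I * cosh (a * z) / a

theorem ofReal_mul_add_mul_I (a u v : ℝ) : (a : ℂ) * (u + v * I) = ↑(a * u) + ↑(a * v) * I := by
  push_cast
  ring

theorem X1_eq_re (a u v : ℝ) : X1 a u v = (X1Potential a (u + v * I)).re := by
  rw [X1Potential, ofReal_mul_add_mul_I, cos_add_mul_I, sin_add_mul_I, Complex.sinh_add,
    Complex.cosh_add, sinh_mul_I, cosh_mul_I]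
  simp only [← ofReal_cos, ← ofReal_sin, ← ofReal_cosh, ← ofReal_sinh, div_ofReal_re, sub_re,
    add_re, mul_re, mul_im, ofReal_re, ofReal_im, I_re, I_im, add_im, sub_im]
  rw [X1]
  ring

theorem X2_eq_re (a u v : ℝ) : X2 a u v = (X2Potential a (u + v * I)).re := by
  rw [X2Potential, ofReal_mul_add_mul_I, cos_add_mul_I, sin_add_mul_I, Complex.sinh_add,
    Complex.cosh_add, sinh_mul_I, cosh_mul_I]
  simp only [← ofReal_cos, ← ofReal_sin, ← ofReal_cosh, ← ofReal_sinh, div_ofReal_re, sub_re,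
    add_re, mul_re, mul_im, ofReal_re, ofReal_im, I_re, I_im, add_im, sub_im]
  rw [X2]
  ring

theorem X3_eq_re (a u v : ℝ) : X3 a u v = (X3Potential a (u + v * I)).re := by
  rw [X3Potential, ofReal_mul_add_mul_I, Complex.cosh_add, sinh_mul_I, cosh_mul_I]
  simp only [← ofReal_cos, ← ofReal_sin, ← ofReal_cosh, ← ofReal_sinh, div_ofReal_re, add_re,
    mul_re, mul_im, ofReal_re, ofReal_im, I_re, I_im, add_im]
  rw [X3]
  ring

end

theorem bending_helicoid_timelike_harmonic_general (a : ℝ) (u v : ℝ) :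
    deriv (deriv (fun s => X1 a s v)) u + deriv (deriv (fun t => X1 a u t)) v = 0 ∧
    deriv (deriv (fun s => X2 a s v)) u + deriv (deriv (fun t => X2 a u t)) v = 0 ∧
    deriv (deriv (fun s => X3 a s v)) u + deriv (deriv (fun t => X3 a u t)) v = 0 :=
  ⟨harmonic_of_eq_re (by unfold X1Potential; fun_prop) (X1_eq_re a) u v,
    harmonic_of_eq_re (by unfold X2Potential; fun_prop) (X2_eq_re a) u v,
    harmonic_of_eq_re (by unfold X3Potential; fun_prop) (X3_eq_re a) u v⟩

/-- Each coordinate function of the bending helicoid with timelike axis is harmonic. -/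
theorem bending_helicoid_timelike_harmonic (a : ℝ) (ha : 0 < a) (u v : ℝ) :
    deriv (deriv (fun s => X1 a s v)) u + deriv (deriv (fun t => X1 a u t)) v = 0 ∧
    deriv (deriv (fun s => X2 a s v)) u + deriv (deriv (fun t => X2 a u t)) v = 0 ∧
    deriv (deriv (fun s => X3 a s v)) u + deriv (deriv (fun t => X3 a u t)) v = 0 :=
  bending_helicoid_timelike_harmonic_general a u v
end

section
/- The map X : ℝ² → ℝ³ defined (for a fixed real parameter a > 0) by X(u,v) = ( [a·cos u·sin(a v)·cosh(a u)·cosh v − a·sin u·cos(a v)·sinh(a u)·sinh v + cos u·cos(a v)·cosh(a u)·sinh v + sin u·sin(a v)·sinh(a u)·cosh v]/(a²+1) + cos u·cosh v , [a·cos u·cos(a v)·sinh(a u)·sinh v + a·sin u·sin(a v)·cosh(a u)·cosh v + sin u·cos(a v)·cosh(a u)·sinh v − cos u·sin(a v)·sinh(a u)·cosh v]/(a²+1) + sin u·cosh v , −sin(a v)·sinh(a u)/a ) is Lorentz-conformal: for all (u,v) ∈ ℝ², ⟨X_u, X_u⟩_L = ⟨X_v, X_v⟩_L and ⟨X_u,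 X_v⟩_L = 0, where X_u, X_v denote the partial derivatives of X. -/
/-! `X₁ + i X₂ = e^{iu} (radial + i angular)`, so `X` is a profile turned by the angle `u` about
the timelike axis. Such rotations are Lorentz isometries, hence `X_u` and `X_v` may be read in
the turned frame, where the factor `1 / (a² + 1)` cancels and they become the short vectors
`frameXu`, `frameXv`. Conformality is then `sin² + cos² = 1` and `cosh² - sinh² = 1`. -/
open Real

/-- Lorentzian inner product on ℝ³: ⟨p,q⟩ = p₁q₁ + p₂q₂ − p₃q₃. -/
noncomputable def lorentz (p q : ℝ × ℝ × ℝ) : ℝ :=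
  p.1 * q.1 + p.2.1 * q.2.1 - p.2.2 * q.2.2

/-- Partial derivative of X with respect to u. -/
noncomputable def Xu (a u v : ℝ) : ℝ × ℝ × ℝ :=
  (deriv (fun s => X1 a s v) u, deriv (fun s => X2 a s v) u, deriv (fun s => X3 a s v) u)

/-- Partial derivative of X with respect to v. -/
noncomputable def Xv (a u v : ℝ) : ℝ × ℝ × ℝ :=
  (deriv (fun t => X1 a u t) v, deriv (fun t => X2 a u t) v, deriv (fun t => X3 a u t) v)

namespace BendingHelicoid

noncomputable def rotZ (θ : ℝ) (p : ℝ × ℝ × ℝ) : ℝ × ℝ × ℝ :=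
  (cos θ * p.1 - sin θ * p.2.1, sin θ * p.1 + cos θ * p.2.1, p.2.2)

theorem lorentz_rotZ (θ : ℝ) (p q : ℝ × ℝ × ℝ) :
    lorentz (rotZ θ p) (rotZ θ q) = lorentz p q := by
  simp only [lorentz, rotZ]
  linear_combination (p.1 * q.1 + p.2.1 * q.2.1) * sin_sq_add_cos_sq θ

theorem hasDerivAt_cos_mul_sub_sin_mul {f g : ℝ → ℝ} {f' g' x : ℝ}
    (hf : HasDerivAt f f' x) (hg : HasDerivAt g g' x) :
    HasDerivAt (fun s => cos s * f s - sin s * g s)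
      (cos x * (f' - g x) - sin x * (g' + f x)) x := by
  refine (((hasDerivAt_cos x).mul hf).sub ((hasDerivAt_sin x).mul hg)).congr_deriv ?_
  ring

theorem hasDerivAt_sin_mul_add_cos_mul {f g : ℝ → ℝ} {f' g' x : ℝ}
    (hf : HasDerivAt f f' x) (hg : HasDerivAt g g' x) :
    HasDerivAt (fun s => sin s * f s + cos s * g s)
      (sin x * (f' - g x) + cos x * (g' + f x)) x := by
  refine (((hasDerivAt_sin x).mul hf).add ((hasDerivAt_cos x).mul hg)).congr_deriv ?_
  ring

noncomputable def radial (a u v : ℝ) : ℝ :=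
  cosh (a * u) * (a * sin (a * v) * cosh v + cos (a * v) * sinh v) / (a ^ 2 + 1) + cosh v

noncomputable def angular (a u v : ℝ) : ℝ :=
  sinh (a * u) * (a * cos (a * v) * sinh v - sin (a * v) * cosh v) / (a ^ 2 + 1)

theorem X1_eq (a u v : ℝ) : X1 a u v = cos u * radial a u v - sin u * angular a u v := by
  simp only [X1, radial, angular]; ring

theorem X2_eq (a u v : ℝ) : X2 a u v = sin u * radial a u v + cos u * angular a u v := by
  simp only [X2, radial, angular]; ring

theorem hasDerivAt_radial_u (a u v : ℝ) :
    HasDerivAt (radial a · v)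
      (a * sinh (a * u) * (a * sin (a * v) * cosh v + cos (a * v) * sinh v) / (a ^ 2 + 1)) u :=
  (((((hasDerivAt_id' u).const_mul a).cosh.mul_const
    (a * sin (a * v) * cosh v + cos (a * v) * sinh v)).div_const (a ^ 2 + 1)).add_const
    (cosh v)).congr_deriv (by ring)

theorem hasDerivAt_angular_u (a u v : ℝ) :
    HasDerivAt (angular a · v)
      (a * cosh (a * u) * (a * cos (a * v) * sinh v - sin (a * v) * cosh v) / (a ^ 2 + 1)) u :=
  ((((hasDerivAt_id' u).const_mul a).sinh.mul_const
    (a * cos (a * v) * sinh v - sin (a * v) * cosh v)).div_const (a ^ 2 + 1)).congr_deriv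
    (by ring)

theorem hasDerivAt_radial_v (a u v : ℝ) :
    HasDerivAt (radial a u ·) (cosh (a * u) * cos (a * v) * cosh v + sinh v) v := by
  have hsin := ((hasDerivAt_id' v).const_mul a).sin
  have hcos := ((hasDerivAt_id' v).const_mul a).cos
  refine (((((hsin.const_mul a).mul (hasDerivAt_cosh v)).add
    (hcos.mul (hasDerivAt_sinh v))).const_mul (cosh (a * u))).div_const (a ^ 2 + 1)
    |>.add (hasDerivAt_cosh v)).congr_deriv ?_
  field_simp
  ring

theorem hasDerivAt_angular_v (a u v : ℝ) :
    HasDerivAt (angular a u ·) (-(sinh (a * u) * sin (a * v) * sinh v)) v := by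
  have hsin := ((hasDerivAt_id' v).const_mul a).sin
  have hcos := ((hasDerivAt_id' v).const_mul a).cos
  refine ((((hcos.const_mul a).mul (hasDerivAt_sinh v)).sub
    (hsin.mul (hasDerivAt_cosh v))).const_mul (sinh (a * u))).div_const (a ^ 2 + 1)
    |>.congr_deriv ?_
  field_simp
  ring

theorem hasDerivAt_X3_u {a : ℝ} (ha : a ≠ 0) (u v : ℝ) :
    HasDerivAt (X3 a · v) (-(sin (a * v) * cosh (a * u))) u :=
  (((((hasDerivAt_id' u).const_mul a).sinh.const_mul (sin (a * v))).neg).div_const a).congr_deriv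
    (by field_simp)

theorem hasDerivAt_X3_v {a : ℝ} (ha : a ≠ 0) (u v : ℝ) :
    HasDerivAt (X3 a u ·) (-(cos (a * v) * sinh (a * u))) v :=
  (((((hasDerivAt_id' v).const_mul a).sin.mul_const (sinh (a * u))).neg).div_const a).congr_deriv
    (by field_simp)

noncomputable def frameXu (a u v : ℝ) : ℝ × ℝ × ℝ :=
  (sinh (a * u) * sin (a * v) * cosh v, cosh (a * u) * cos (a * v) * sinh v + cosh v,
    -(sin (a * v) * cosh (a * u)))

noncomputable def frameXv (a u v : ℝ) : ℝ × ℝ × ℝ :=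
  (cosh (a * u) * cos (a * v) * cosh v + sinh v, -(sinh (a * u) * sin (a * v) * sinh v),
    -(cos (a * v) * sinh (a * u)))

theorem Xu_eq_rotZ {a : ℝ} (ha : a ≠ 0) (u v : ℝ) : Xu a u v = rotZ u (frameXu a u v) := by
  have frame_fst :
      a * sinh (a * u) * (a * sin (a * v) * cosh v + cos (a * v) * sinh v) / (a ^ 2 + 1)
        - angular a u v = sinh (a * u) * sin (a * v) * cosh v := by
    simp only [angular]; field_simp; ring
  have frame_snd :
      a * cosh (a * u) * (a * cos (a * v) * sinh v - sin (a * v) * cosh v) / (a ^ 2 + 1)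
        + radial a u v = cosh (a * u) * cos (a * v) * sinh v + cosh v := by
    simp only [radial]; field_simp; ring
  have h1 := hasDerivAt_cos_mul_sub_sin_mul (hasDerivAt_radial_u a u v)
    (hasDerivAt_angular_u a u v)
  have h2 := hasDerivAt_sin_mul_add_cos_mul (hasDerivAt_radial_u a u v)
    (hasDerivAt_angular_u a u v)
  rw [frame_fst, frame_snd] at h1 h2
  rw [Xu, (h1.congr_of_eventuallyEq (.of_forall (X1_eq a · v))).deriv,
    (h2.congr_of_eventuallyEq (.of_forall (X2_eq a · v))).deriv, (hasDerivAt_X3_u ha u v).deriv]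
  rfl

theorem Xv_eq_rotZ {a : ℝ} (ha : a ≠ 0) (u v : ℝ) : Xv a u v = rotZ u (frameXv a u v) := by
  have h1 := ((hasDerivAt_radial_v a u v).const_mul (cos u)).sub
    ((hasDerivAt_angular_v a u v).const_mul (sin u))
  have h2 := ((hasDerivAt_radial_v a u v).const_mul (sin u)).add
    ((hasDerivAt_angular_v a u v).const_mul (cos u))
  rw [Xv, (h1.congr_of_eventuallyEq (.of_forall (X1_eq a u))).deriv,
    (h2.congr_of_eventuallyEq (.of_forall (X2_eq a u))).deriv, (hasDerivAt_X3_v ha u v).deriv]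
  rfl

theorem lorentz_frameXu_self (a u v : ℝ) :
    lorentz (frameXu a u v) (frameXu a u v) = lorentz (frameXv a u v) (frameXv a u v) := by
  simp only [lorentz, frameXu, frameXv]
  linear_combination
    (sinh (a * u) ^ 2 * sin (a * v) ^ 2 - cosh (a * u) ^ 2 * cos (a * v) ^ 2 + 1) *
        cosh_sq_sub_sinh_sq v
      - (sin (a * v) ^ 2 + cos (a * v) ^ 2) * cosh_sq_sub_sinh_sq (a * u)
      - sin_sq_add_cos_sq (a * v)

theorem lorentz_frameXu_frameXv (a u v : ℝ) : lorentz (frameXu a u v) (frameXv a u v) = 0 := by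
  simp only [lorentz, frameXu, frameXv]
  linear_combination
    sinh (a * u) * cosh (a * u) * sin (a * v) * cos (a * v) * cosh_sq_sub_sinh_sq v

end BendingHelicoid

/-- The bending helicoid with timelike axis is Lorentz-conformal. -/
theorem bending_helicoid_timelike_conformal (a : ℝ) (ha : 0 < a) (u v : ℝ) :
    lorentz (Xu a u v) (Xu a u v) = lorentz (Xv a u v) (Xv a u v) ∧
    lorentz (Xu a u v) (Xv a u v) = 0 := by
  rw [BendingHelicoid.Xu_eq_rotZ ha.ne', BendingHelicoid.Xv_eq_rotZ ha.ne',
    BendingHelicoid.lorentz_rotZ, BendingHelicoid.lorentz_rotZ, BendingHelicoid.lorentz_rotZ]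
  exact ⟨BendingHelicoid.lorentz_frameXu_self a u v,
    BendingHelicoid.lorentz_frameXu_frameXv a u v⟩
end

section
/- Let a > 0 and let X : ℝ² → ℝ³ be defined by X(u,v) = ( [a·cos u·sin(a v)·cosh(a u)·cosh v − a·sin u·cos(a v)·sinh(a u)·sinh v + cos u·cos(a v)·cosh(a u)·sinh v + sin u·sin(a v)·sinh(a u)·cosh v]/(a²+1) + cos u·cosh v , [a·cos u·cos(a v)·sinh(a u)·sinh v + a·sin u·sin(a v)·cosh(a u)·cosh v + sin u·cos(a v)·cosh(a u)·sinh v − cos u·sin(a v)·sinh(a u)·cosh v]/(a²+1) + sin u·cosh v , −sin(a v)·sinh(a u)/a ). Then for every u ∈ ℝ: (i) X(u,0) = (cos u, sin u, 0); and (ii) the vector V(u) = (−sinh(a u)·cos u, −sinh(a u)·sin u, cosh(a u)) satisfies ⟨V(u),V(u)⟩_L = −1, ⟨V(u), ∂X/∂u (u,0)⟩_L = 0 and ⟨V(u), ∂X/∂v (u,0)⟩_L = 0. -/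
/-!
Along `v = 0` every term of `X` carrying `sin (a v)` or `sinh v` vanishes, so `X` restricts to
the circle and `∂X/∂u (u,0)` is its tangent `(-sin u, cos u, 0)`. In the `v`-direction the first two
coordinates are combinations of `sin (a v) cosh v`, `cos (a v) sinh v` and `cosh v`, whose derivatives at `0`
are `a`, `1` and `0`; the `sinh (a u)` terms then cancel and the factor `a² + 1` divides out, giving
`∂X/∂v (u,0) = cosh (a u) · (cos u, sin u, 0) - sinh (a u) · (0, 0, 1)`, which is Lorentz-orthogonal
to `V u` by `sin² + cos² = 1`; `V u` is unit timelike by `cosh² - sinh² = 1`.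
-/

open Real

/-- The Björling data normal field. -/
noncomputable def V (a u : ℝ) : ℝ × ℝ × ℝ :=
  (- sinh (a*u) * cos u, - sinh (a*u) * sin u, cosh (a*u))

theorem hasDerivAt_sin_mul_zero (a : ℝ) : HasDerivAt (fun t => sin (a * t)) a 0 := by
  simpa using ((hasDerivAt_id (0 : ℝ)).const_mul a).sin

theorem hasDerivAt_cos_mul_zero (a : ℝ) : HasDerivAt (fun t => cos (a * t)) 0 0 := by
  simpa using ((hasDerivAt_id (0 : ℝ)).const_mul a).cos

theorem hasDerivAt_sin_mul_cosh_add_cos_mul_sinh_zero (a p q : ℝ) :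
    HasDerivAt (fun t => p * (sin (a * t) * cosh t) + q * (cos (a * t) * sinh t)) (p * a + q) 0 := by
  have h := (((hasDerivAt_sin_mul_zero a).mul (hasDerivAt_cosh 0)).const_mul p).add
    (((hasDerivAt_cos_mul_zero a).mul (hasDerivAt_sinh 0)).const_mul q)
  exact h.congr_deriv (by simp)

theorem X1_zero (a u : ℝ) : X1 a u 0 = cos u := by
  simp [X1]

theorem X2_zero (a u : ℝ) : X2 a u 0 = sin u := by
  simp [X2]

theorem X3_zero (a u : ℝ) : X3 a u 0 = 0 := by
  simp [X3]

theorem Xu_zero (a u : ℝ) : Xu a u 0 = (-sin u, cos u, 0) := by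
  simp [Xu, X1_zero, X2_zero, X3_zero]

theorem hasDerivAt_X1_zero (a u : ℝ) :
    HasDerivAt (fun t => X1 a u t) (cos u * cosh (a * u)) 0 := by
  have h := ((hasDerivAt_sin_mul_cosh_add_cos_mul_sinh_zero a
      (a * cos u * cosh (a * u) + sin u * sinh (a * u))
      (cos u * cosh (a * u) - a * sin u * sinh (a * u))).div_const (a ^ 2 + 1)).add
    ((hasDerivAt_cosh 0).const_mul (cos u))
  refine (h.congr_deriv ?_).congr_of_eventuallyEq (.of_forall fun t => ?_)
  · rw [sinh_zero, mul_zero, add_zero]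
    field_simp
    ring
  · simp only [X1, Pi.add_apply]
    ring

theorem hasDerivAt_X2_zero (a u : ℝ) :
    HasDerivAt (fun t => X2 a u t) (sin u * cosh (a * u)) 0 := by
  have h := ((hasDerivAt_sin_mul_cosh_add_cos_mul_sinh_zero a
      (a * sin u * cosh (a * u) - cos u * sinh (a * u))
      (sin u * cosh (a * u) + a * cos u * sinh (a * u))).div_const (a ^ 2 + 1)).add
    ((hasDerivAt_cosh 0).const_mul (sin u))
  refine (h.congr_deriv ?_).congr_of_eventuallyEq (.of_forall fun t => ?_)
  · rw [sinh_zero, mul_zero, add_zero]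
    field_simp
    ring
  · simp only [X2, Pi.add_apply]
    ring

theorem hasDerivAt_X3_zero {a : ℝ} (ha : a ≠ 0) (u : ℝ) :
    HasDerivAt (fun t => X3 a u t) (-sinh (a * u)) 0 := by
  exact (((hasDerivAt_sin_mul_zero a).mul_const (sinh (a * u))).neg.div_const a).congr_deriv
    (by field_simp)

theorem Xv_zero {a : ℝ} (ha : a ≠ 0) (u : ℝ) :
    Xv a u 0 = (cos u * cosh (a * u), sin u * cosh (a * u), -sinh (a * u)) := by
  simp only [Xv, (hasDerivAt_X1_zero a u).deriv, (hasDerivAt_X2_zero a u).deriv,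
    (hasDerivAt_X3_zero ha u).deriv]

theorem lorentz_V_self (a u : ℝ) : lorentz (V a u) (V a u) = -1 := by
  simp only [lorentz, V]
  linear_combination sinh (a * u) ^ 2 * sin_sq_add_cos_sq u - cosh_sq_sub_sinh_sq (a * u)

/-- The bending helicoid with timelike axis contains the circle (cos u, sin u, 0) and
V(u) is a unit timelike vector field normal to the surface along it. -/
theorem bending_helicoid_timelike_bjorling (a : ℝ) (ha : 0 < a) (u : ℝ) :
    (X1 a u 0, X2 a u 0, X3 a u 0) = (cos u, sin u, 0) ∧
    lorentz (V a u) (V a u) = -1 ∧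
    lorentz (V a u) (Xu a u 0) = 0 ∧
    lorentz (V a u) (Xv a u 0) = 0 := by
  refine ⟨by rw [X1_zero, X2_zero, X3_zero], lorentz_V_self a u, ?_, ?_⟩
  · rw [Xu_zero]
    simp only [lorentz, V]
    ring
  · rw [Xv_zero ha.ne']
    simp only [lorentz, V]
    linear_combination (-(sinh (a * u) * cosh (a * u))) * sin_sq_add_cos_sq u
end

section
/- Let a ∈ ℝ and define X : ℝ² → ℝ³ by X(u,v) = ( v·cosh a , sinh a·sinh u·sin v + sinh u·cos v , sinh a·cosh u·sin v + cosh u·cos v ). For every θ ∈ ℝ let Ψ(θ) be the linear map of ℝ³ with matrix rows (1,0,0), (0, cosh θ, sinh θ), (0, sinh θ, cosh θ). Then Ψ(θ)·X(u,v) = X(u+θ, v) for all θ, u, v ∈ ℝ; hence X is a rotational surface (the hyperbolic catenoid) with spacelike axis (1,0,0). -/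
open Real

/-- The hyperbolic catenoid. -/
noncomputable def X (a u v : ℝ) : ℝ × ℝ × ℝ :=
  (v * cosh a,
   sinh a * sinh u * sin v + sinh u * cos v,
   sinh a * cosh u * sin v + cosh u * cos v)

/-- Rotation of Lorentz–Minkowski space about the spacelike axis (1,0,0) by hyperbolic
angle θ. -/
noncomputable def Psi (θ : ℝ) (p : ℝ × ℝ × ℝ) : ℝ × ℝ × ℝ :=
  (p.1,
   cosh θ * p.2.1 + sinh θ * p.2.2,
   sinh θ * p.2.1 + cosh θ * p.2.2)

/-- The hyperbolic catenoid is a rotational surface with spacelike axis (1,0,0):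
rotating the surface by θ corresponds to shifting the parameter u by θ. -/
theorem hyperbolic_catenoid_rotational (a : ℝ) :
    ∀ θ u v : ℝ, Psi θ (X a u v) = X a (u + θ) v := by
  intro θ u v
  simp only [Psi, X, Prod.mk.injEq, sinh_add, cosh_add]
  exact ⟨trivial, by ring, by ring⟩
end
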